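/- arXiv:2601.04640 — 6 statements merged into one kernel-verified Lean document; each statement's English description precedes it below -/
import Mathlib

section
/- Let H, Q be linear operators on a complex vector space and |S₀⟩ a vector satisfying H|S₀⟩ = E₀|S₀⟩, [H,Q]|S₀⟩ = ℰ Q|S₀⟩, and [[H,Q],Q] = 0. Then for every nonnegative integer n, H Qⁿ|S₀⟩ = (E₀ + nℰ) Qⁿ|S₀⟩. -/
/-- RSGA-1: if `H S₀ = E₀ • S₀`, `[H,Q] S₀ = ℰ • (Q S₀)`, and `[[H,Q],Q] = 0`
as an operator identity, then `H (Qⁿ S₀) = (E₀ + n ℰ) • Qⁿ S₀` for all `n`. -/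
theorem rsga1_tower {V : Type*} [AddCommGroup V] [Module ℂ V]
    (H Q : Module.End ℂ V) (E₀ ℰ : ℂ) (S₀ : V)
    (h1 : H S₀ = E₀ • S₀)
    (h2 : ⁅H, Q⁆ S₀ = ℰ • (Q S₀))
    (h3 : ⁅⁅H, Q⁆, Q⁆ = 0) :
    ∀ n : ℕ, H ((Q ^ n) S₀) = (E₀ + (n : ℂ) * ℰ) • ((Q ^ n) S₀) := by
  have hc : Commute ⁅H, Q⁆ Q := by
    have := h3
    rw [Ring.lie_def] at this
    exact sub_eq_zero.mp this
  have key : ∀ n : ℕ, ⁅H, Q⁆ ((Q ^ n) S₀) = ℰ • ((Q ^ (n + 1)) S₀) := by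
    intro n
    have hpow : ⁅H, Q⁆ * Q ^ n = Q ^ n * ⁅H, Q⁆ := (hc.pow_right n).eq
    calc ⁅H, Q⁆ ((Q ^ n) S₀) = (⁅H, Q⁆ * Q ^ n) S₀ := rfl
      _ = (Q ^ n * ⁅H, Q⁆) S₀ := by rw [hpow]
      _ = (Q ^ n) (⁅H, Q⁆ S₀) := rfl
      _ = (Q ^ n) (ℰ • (Q S₀)) := by rw [h2]
      _ = ℰ • ((Q ^ (n + 1)) S₀) := by
          rw [map_smul, pow_succ]
          rfl
  intro n
  induction n with
  | zero => simpa using h1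
  | succ n ih =>
    have step : H ((Q ^ (n + 1)) S₀)
        = ⁅H, Q⁆ ((Q ^ n) S₀) + Q (H ((Q ^ n) S₀)) := by
      rw [Ring.lie_def]
      simp [pow_succ', Module.End.mul_apply, LinearMap.sub_apply]
    rw [step, key n, ih, map_smul]
    have : Q ((Q ^ n) S₀) = (Q ^ (n + 1)) S₀ := by
      rw [pow_succ']; rfl
    rw [this]
    rw [← add_smul]
    push_cast
    ring_nf
end

section
/- Let H, Q be linear operators on a complex vector space, m ≥ 1 an integer, and |S₀⟩ a vector such that H|S₀⟩ = E₀|S₀⟩, [H,Q]|S₀⟩ = ℰ Q|S₀⟩, the r-fold iterated commutator ad_Q^{r-1}([H,Q]) annihilates |S₀⟩ for 2 ≤ r ≤ m, and the (m+1)-fold iterated commutator ad_Q^{m}([H,Q]) = 0 as an operator. Then for every nonnegative integer n, H Qⁿ|S₀⟩ = (E₀ + nℰ) Qⁿ|S₀⟩. -/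
/-!
Write `D₀ = ⁅H, Q⁆` and `Dₖ = ⁅Dₖ₋₁, Q⁆`. Since `Dₖ Q = Q Dₖ + Dₖ₊₁`, the vectors annihilated by
all `Dₖ` with `k ≥ 1` form a `Q`-stable set; the hypotheses put `S₀` in it, so `D₀` commutes with
`Qⁿ` on `S₀` and `⁅H, Q⁆ Qⁿ S₀ = ℰ Qⁿ⁺¹ S₀`. Then `H Qⁿ⁺¹ S₀ = Q H Qⁿ S₀ + ⁅H, Q⁆ Qⁿ S₀` raises
the eigenvalue by `ℰ` at each step.
-/

theorem Function.iterate_eq_zero_of_le {A : Type*} [Zero A] {f : A → A} (hf : f 0 = 0) {x : A}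
    {m k : ℕ} (hx : f^[m] x = 0) (hmk : m ≤ k) : f^[k] x = 0 := by
  obtain ⟨j, rfl⟩ := Nat.exists_eq_add_of_le hmk
  rw [add_comm, Function.iterate_add_apply, hx, Function.iterate_fixed hf]

theorem Ring.mul_eq_mul_add_lie {A : Type*} [Ring A] (X Q : A) : X * Q = Q * X + ⁅X, Q⁆ := by
  rw [Ring.lie_def]
  abel

namespace Module.End

variable {R M : Type*} [Ring R] [AddCommGroup M] [Module R M]

theorem apply_apply_eq_apply_apply_add_lie (X Q : Module.End R M) (v : M) :
    X (Q v) = Q (X v) + ⁅X, Q⁆ v := by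
  simpa only [mul_apply, LinearMap.add_apply] using congrArg (· v) (Ring.mul_eq_mul_add_lie X Q)

theorem pow_succ_apply' (Q : Module.End R M) (n : ℕ) (v : M) : (Q ^ (n + 1)) v = Q ((Q ^ n) v) := by
  rw [pow_succ', mul_apply]

variable {D Q : Module.End R M} {v : M}

theorem iterate_lie_apply_pow_apply_eq_zero
    (hv : ∀ k, 1 ≤ k → ((fun X => ⁅X, Q⁆)^[k] D) v = 0) (n : ℕ) :
    ∀ k, 1 ≤ k → ((fun X => ⁅X, Q⁆)^[k] D) ((Q ^ n) v) = 0 := by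
  induction n with
  | zero => simpa using hv
  | succ n ih =>
    intro k hk
    rw [pow_succ_apply', apply_apply_eq_apply_apply_add_lie, ih k hk, map_zero, zero_add,
      ← Function.iterate_succ_apply' (fun X => ⁅X, Q⁆), ih (k + 1) (by omega)]

theorem apply_pow_apply_eq_pow_apply_apply
    (hv : ∀ k, 1 ≤ k → ((fun X => ⁅X, Q⁆)^[k] D) v = 0) (n : ℕ) :
    D ((Q ^ n) v) = (Q ^ n) (D v) := by
  induction n with
  | zero => rfl
  | succ n ih =>
    have hDQ : ⁅D, Q⁆ ((Q ^ n) v) = 0 :=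
      iterate_lie_apply_pow_apply_eq_zero hv n 1 le_rfl
    rw [pow_succ_apply', apply_apply_eq_apply_apply_add_lie, ih, hDQ, add_zero, pow_succ_apply']

theorem apply_pow_apply_eq_smul_of_iterate_lie {H : Module.End R M} {E₀ ℰ : R}
    (h1 : H v = E₀ • v) (h2 : ⁅H, Q⁆ v = ℰ • Q v)
    (hv : ∀ k, 1 ≤ k → ((fun X => ⁅X, Q⁆)^[k] ⁅H, Q⁆) v = 0) (n : ℕ) :
    H ((Q ^ n) v) = (E₀ + n * ℰ) • (Q ^ n) v := by
  induction n with
  | zero => simpa using h1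
  | succ n ih =>
    have hraise : ⁅H, Q⁆ ((Q ^ n) v) = ℰ • (Q ^ (n + 1)) v := by
      rw [apply_pow_apply_eq_pow_apply_apply hv, h2, map_smul, ← mul_apply, ← pow_succ]
    rw [pow_succ_apply', apply_apply_eq_apply_apply_add_lie, ih, map_smul, ← pow_succ_apply',
      hraise, ← add_smul, Nat.cast_succ, add_one_mul, add_assoc]

end Module.End

theorem rsga_m_tower_general {V : Type*} [AddCommGroup V] [Module ℂ V]
    (H Q : Module.End ℂ V) (E₀ ℰ : ℂ) (S₀ : V) (m : ℕ)
    (h1 : H S₀ = E₀ • S₀)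
    (h2 : ⁅H, Q⁆ S₀ = ℰ • (Q S₀))
    (h3 : ∀ r : ℕ, 2 ≤ r → r ≤ m →
      (((fun X => ⁅X, Q⁆)^[r - 1]) ⁅H, Q⁆) S₀ = 0)
    (h4 : ((fun X => ⁅X, Q⁆)^[m]) ⁅H, Q⁆ = 0) :
    ∀ n : ℕ, H ((Q ^ n) S₀) = (E₀ + (n : ℂ) * ℰ) • ((Q ^ n) S₀) := by
  refine Module.End.apply_pow_apply_eq_smul_of_iterate_lie h1 h2 fun k hk => ?_
  rcases Nat.lt_or_ge k m with hkm | hmk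
  · simpa using h3 (k + 1) (by omega) (by omega)
  · rw [Function.iterate_eq_zero_of_le (by simp [Ring.lie_def]) h4 hmk, LinearMap.zero_apply]

/-- RSGA-m: `H S₀ = E₀ • S₀`, `[H,Q] S₀ = ℰ • Q S₀`, the `r`-fold iterated
commutator `[[…[H,Q],Q],…,Q]` (with `r` occurrences of `Q`) annihilates `S₀`
for `2 ≤ r ≤ m`, and the `(m+1)`-fold iterated commutator vanishes as an
operator.  Then `H (Qⁿ S₀) = (E₀ + n ℰ) • Qⁿ S₀` for all `n ≥ 0`. -/
theorem rsga_m_tower {V : Type*} [AddCommGroup V] [Module ℂ V]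
    (H Q : Module.End ℂ V) (E₀ ℰ : ℂ) (S₀ : V) (m : ℕ) (hm : 1 ≤ m)
    (h1 : H S₀ = E₀ • S₀)
    (h2 : ⁅H, Q⁆ S₀ = ℰ • (Q S₀))
    (h3 : ∀ r : ℕ, 2 ≤ r → r ≤ m →
      (((fun X => ⁅X, Q⁆)^[r - 1]) ⁅H, Q⁆) S₀ = 0)
    (h4 : ((fun X => ⁅X, Q⁆)^[m]) ⁅H, Q⁆ = 0) :
    ∀ n : ℕ, H ((Q ^ n) S₀) = (E₀ + (n : ℂ) * ℰ) • ((Q ^ n) S₀) :=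
  rsga_m_tower_general H Q E₀ ℰ S₀ m h1 h2 h3 h4
end

section
/- Let H, Q₁, …, Q_N be linear operators on a complex vector space and |S₀⟩ a vector satisfying: H|S₀⟩ = E₀|S₀⟩; [H, Q_l]|S₀⟩ = ℰ_l Q_l|S₀⟩ for each l; [[H,Q_l],Q_l] = 0 for each l; [Q_l, Q_k] = 0 for all l,k; and [[H,Q_l],Q_k] = 0 for all l ≠ k. Then for every multi-index (m₁,…,m_N) of nonnegative integers, H (Π_l Q_l^{m_l})|S₀⟩ = (E₀ + Σ_l m_l ℰ_l)(Π_l Q_l^{m_l})|S₀⟩. -/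
/-!
Each `Q_l` is a ladder operator at `S₀`: since `⁅H, Q_l⁆` commutes with every `Q_k`, the relation
`⁅H, Q_l⁆ S₀ = ℰ_l Q_l S₀` transports to `⁅H, Q_l⁆ w = ℰ_l Q_l w` for every vector `w = P S₀` with
`P` a product of the `Q_k`. Writing `H Q_l w = Q_l H w + ⁅H, Q_l⁆ w`, applying `Q_l` to an
eigenvector `w` of `H` therefore raises its eigenvalue by `ℰ_l`, and the tower follows by
induction on the factors of the product.
-/

namespace Module.End

variable {R V : Type*} [CommRing R] [AddCommGroup V] [Module R V]

theorem apply_apply_of_commute {X Y : Module.End R V} (h : Commute X Y) (v : V) :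
    X (Y v) = Y (X v) := by
  simpa only [mul_apply] using DFunLike.congr_fun h.eq v

theorem apply_apply_eq_apply_apply_add_lie_s5 (H A : Module.End R V) (w : V) :
    H (A w) = A (H w) + ⁅H, A⁆ w := by
  rw [Ring.lie_def, LinearMap.sub_apply, mul_apply, mul_apply, add_sub_cancel]

theorem apply_apply_eq_smul_of_lie_apply {H A : Module.End R V} {w : V} {c e : R}
    (hw : H w = c • w) (hA : ⁅H, A⁆ w = e • A w) :
    H (A w) = (c + e) • A w := by
  rw [apply_apply_eq_apply_apply_add_lie_s5, hw, hA, map_smul, add_smul]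

theorem apply_pow_apply_eq_smul_of_lie_apply {H A : Module.End R V} {w : V} {c e : R}
    (hw : H w = c • w) (hA : ⁅H, A⁆ w = e • A w) (hcomm : Commute ⁅H, A⁆ A) (n : ℕ) :
    H ((A ^ n) w) = (c + n * e) • (A ^ n) w := by
  induction n with
  | zero => simpa using hw
  | succ n ih =>
    have hladder : ⁅H, A⁆ ((A ^ n) w) = e • A ((A ^ n) w) := by
      rw [apply_apply_of_commute (hcomm.pow_right n), hA, map_smul,
        apply_apply_of_commute (Commute.self_pow A n)]
    rw [pow_succ', mul_apply, apply_apply_eq_smul_of_lie_apply ih hladder]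
    push_cast
    rw [add_one_mul, add_assoc]

theorem apply_list_prod_pow_apply_eq_smul {ι : Type*} {H : Module.End R V}
    {Q : ι → Module.End R V} {E₀ : R} {ℰ : ι → R} {S₀ : V}
    (hS₀ : H S₀ = E₀ • S₀) (hQ : ∀ i, ⁅H, Q i⁆ S₀ = ℰ i • Q i S₀)
    (hQQ : ∀ i j, Commute (Q i) (Q j)) (hHQQ : ∀ i j, Commute ⁅H, Q i⁆ (Q j))
    (m : ι → ℕ) (l : List ι) :
    H ((l.map fun i => Q i ^ m i).prod S₀) =
      (E₀ + (l.map fun i => (m i : R) * ℰ i).sum) • (l.map fun i => Q i ^ m i).prod S₀ := by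
  induction l with
  | nil => simpa using hS₀
  | cons i l ih =>
    rw [List.map_cons, List.prod_cons, mul_apply, List.map_cons, List.sum_cons]
    set P := (l.map fun i => Q i ^ m i).prod
    have commute_prod (X : Module.End R V) (hX : ∀ j, Commute X (Q j)) : Commute X P :=
      Commute.list_prod_right _ _ fun _ hY => by
        obtain ⟨j, -, rfl⟩ := List.mem_map.mp hY
        exact (hX j).pow_right _
    have hladder : ⁅H, Q i⁆ (P S₀) = ℰ i • Q i (P S₀) := by
      rw [apply_apply_of_commute (commute_prod _ (hHQQ i)), hQ, map_smul,
        apply_apply_of_commute (commute_prod _ (hQQ i))]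
    rw [apply_pow_apply_eq_smul_of_lie_apply ih hladder (hHQQ i i), add_right_comm E₀, add_assoc]

end Module.End

/-- Multi-ladder RSGA-1 (MLRSGA-1): mutually commuting ladder operators with
restricted spectrum-generating relations produce a multi-dimensional tower of
exact eigenstates:
`H (Π_l Q_l^{m_l}) S₀ = (E₀ + Σ_l m_l ℰ_l) • (Π_l Q_l^{m_l}) S₀`. -/
theorem mlrsga1_tower {V : Type*} [AddCommGroup V] [Module ℂ V] (N : ℕ)
    (H : Module.End ℂ V) (Q : Fin N → Module.End ℂ V)
    (E₀ : ℂ) (ℰ : Fin N → ℂ) (S₀ : V)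
    (h1 : H S₀ = E₀ • S₀)
    (h2 : ∀ l, ⁅H, Q l⁆ S₀ = ℰ l • ((Q l) S₀))
    (h3 : ∀ l, ⁅⁅H, Q l⁆, Q l⁆ = 0)
    (h4 : ∀ l k, ⁅Q l, Q k⁆ = 0)
    (h5 : ∀ l k, l ≠ k → ⁅⁅H, Q l⁆, Q k⁆ = 0) :
    ∀ m : Fin N → ℕ,
      H ((List.ofFn fun l => Q l ^ m l).prod S₀) =
        (E₀ + ∑ l, (m l : ℂ) * ℰ l) • ((List.ofFn fun l => Q l ^ m l).prod S₀) := by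
  intro m
  have hHQQ (l k : Fin N) : Commute ⁅H, Q l⁆ (Q k) := by
    rw [commute_iff_lie_eq]
    obtain rfl | hlk := eq_or_ne l k
    exacts [h3 l, h5 l k hlk]
  have htower := Module.End.apply_list_prod_pow_apply_eq_smul h1 h2
    (fun l k => commute_iff_lie_eq.mpr (h4 l k)) hHQQ m (List.finRange N)
  rwa [← List.ofFn_eq_map, ← List.ofFn_eq_map, List.sum_ofFn] at htower
end

section
/- On a fermionic Fock space with flavors α₁,…,α_N (N ≥ 2) and sites j ∈ {1,…,L}, define the η-pairing operator η†_{mn} = Σ_j (−1)^j c†_{j,α_m} c†_{j,α_n} for m ≠ n. Then for the SU(N) Hubbard Hamiltonian H = H_hop + H_int with H_hop = −J Σ_j Σ_n (c†_{j,α_n} c_{j+1,α_n} + h.c.) (periodic boundary conditions, L even) and H_int = (U/2) Σ_j Σ_{n≠m} n_{j,α_m} n_{j,α_n}, one has [H_hop, η†_{mn}] = 0 and [H_int, η†_{mn}] = U η†_{mn} + (terms that annihilate the vacuum); consequently the commutator [H, η†_{1n}] acting on any state of the form Π_{n'}(η†_{1n'})^{m_{n'}}|vac⟩ equals U η†_{1n}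 applied to that state. -/
/-!
Everything follows from the single commutator
`[c_{q,a}, c†_{l,m} c†_{l,n}] = δ_{ql} (δ_{am} c†_{l,n} - δ_{an} c†_{l,m})`, the creation operators
anticommuting among themselves. For a bond `p–q` it gives
`[hop_{pq}, η_f] = (f p + f q) (c†_{p,m} c†_{q,n} - c†_{p,n} c†_{q,m})`, which vanishes for the
staggered weight `f j = (-1)^j` because `L` is even. For a number operator it gives
`[n_{j,a}, η_f] = f j · #{a in (m, n)} · c†_{j,m} c†_{j,n}`, so summing `[n_{j,a} n_{j,b}, η_f]`
over `a ≠ b` yields `2 η_f` plus terms `c†_{j,m} c†_{j,n} n_{j,a}`. These remainders kill the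
vacuum, and for `m = 0` they commute with every `η_{0n'}` (their product contains `c†_{j,0}` twice),
so they also kill every tower state.
-/

open Finset

section

attribute [local instance] LieRing.ofAssociativeRing

theorem mul_lie {A : Type*} [Ring A] (x y z : A) : ⁅x * y, z⁆ = x * ⁅y, z⁆ + ⁅x, z⁆ * y := by
  simp only [Ring.lie_def]
  noncomm_ring

theorem neg_one_pow_val_add_one {R : Type*} [Ring R] {L : ℕ} [NeZero L] (hL : Even L)
    (j : Fin L) : (-1 : R) ^ ((j + 1 : Fin L) : ℕ) = -(-1) ^ (j : ℕ) := by
  rw [Fin.val_add, Fin.val_one', neg_one_pow_eq_pow_mod_two, Nat.mod_mod_of_dvd _ hL.two_dvd,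
    Nat.add_mod, Nat.mod_mod_of_dvd _ hL.two_dvd, ← Nat.add_mod, ← neg_one_pow_eq_pow_mod_two,
    pow_succ, mul_neg_one]

theorem Module.End.apply_eq_zero_of_mem_span {R M : Type*} [CommRing R] [AddCommGroup M]
    [Module R M] {s : Set (Module.End R M)} {T : Module.End R M} (hT : T ∈ Submodule.span R s)
    {v : M} (hs : ∀ t ∈ s, t v = 0) : T v = 0 :=
  Submodule.span_le (p := LinearMap.ker (LinearMap.applyₗ v)).mpr hs hT

section Flavours

variable {F : Type*} [DecidableEq F]

def pairCount (m n a : F) : ℂ :=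
  (if a = m then 1 else 0) + (if a = n then 1 else 0)

variable [Fintype F]

theorem sum_pairCount (m n : F) : ∑ a, pairCount m n a = 2 := by
  simp only [pairCount, sum_add_distrib, sum_ite_eq', mem_univ, if_true]
  norm_num

theorem sum_sum_ite_ne_pairCount_mul {m n : F} (hmn : m ≠ n) :
    ∑ b, ∑ a, (if b ≠ a then pairCount m n a * pairCount m n b else 0) = 2 := by
  have row : ∀ b, ∑ a, (if b ≠ a then pairCount m n a * pairCount m n b else 0) =
      (2 - pairCount m n b) * pairCount m n b := by
    intro b
    rw [← sum_filter, filter_ne, sum_erase_eq_sub (mem_univ b), ← sum_mul, sum_pairCount, sub_mul]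
  simp only [row]
  norm_num [pairCount, mul_add, mul_ite, sum_add_distrib, hmn, hmn.symm]

end Flavours

variable {A : Type*} [Ring A] {S F : Type*}

def hopping [Fintype F] (c cd : S → F → A) (p q : S) : A :=
  ∑ a, (cd p a * c q a + cd q a * c p a)

def etaPair [Algebra ℂ A] [Fintype S] (cd : S → F → A) (f : S → ℂ) (m n : F) : A :=
  ∑ l, f l • (cd l m * cd l n)

theorem etaPair_single [Algebra ℂ A] [Fintype S] [DecidableEq S] (cd : S → F → A) (j : S)
    (m n : F) : etaPair cd (Pi.single j 1) m n = cd j m * cd j n := by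
  simp [etaPair, Pi.single_apply, ite_smul]

variable [DecidableEq S] [DecidableEq F]

structure IsCreationCAR (c cd : S → F → A) : Prop where
  cd_anticomm : ∀ j k a b, cd j a * cd k b + cd k b * cd j a = 0
  c_cd_anticomm : ∀ j k a b, c j a * cd k b + cd k b * c j a = if j = k ∧ a = b then 1 else 0

def interaction [Fintype S] [Fintype F] (c cd : S → F → A) : A :=
  ∑ j, ∑ n, ∑ m, if n ≠ m then (cd j m * c j m) * (cd j n * c j n) else 0

namespace IsCreationCAR

variable {c cd : S → F → A}

theorem cd_mul_cd (h : IsCreationCAR c cd) (j k : S) (a b : F) :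
    cd j a * cd k b = -(cd k b * cd j a) :=
  eq_neg_of_add_eq_zero_left (h.cd_anticomm j k a b)

theorem commute_cd_pair (h : IsCreationCAR c cd) (p l : S) (q m n : F) :
    Commute (cd p q) (cd l m * cd l n) := by
  show cd p q * (cd l m * cd l n) = cd l m * cd l n * cd p q
  rw [← mul_assoc, h.cd_mul_cd p l q m, neg_mul, mul_assoc, h.cd_mul_cd p l q n, mul_neg, neg_neg,
    mul_assoc]

theorem lie_c_pair (h : IsCreationCAR c cd) (q l : S) (a m n : F) :
    ⁅c q a, cd l m * cd l n⁆ =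
      if q = l then (if a = m then cd l n else 0) - (if a = n then cd l m else 0) else 0 := by
  have anticomm : ⁅c q a, cd l m * cd l n⁆ =
      (c q a * cd l m + cd l m * c q a) * cd l n - cd l m * (c q a * cd l n + cd l n * c q a) := by
    rw [Ring.lie_def]; noncomm_ring
  rw [anticomm, h.c_cd_anticomm, h.c_cd_anticomm]
  split_ifs <;> simp_all

variable [Algebra ℂ A]

theorem cd_mul_self (h : IsCreationCAR c cd) (j : S) (a : F) : cd j a * cd j a = 0 := by
  have h2 : (2 : ℂ) • (cd j a * cd j a) = 0 := by rw [two_smul, h.cd_anticomm]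
  simpa using h2

variable [Fintype S]

theorem commute_cd_etaPair (h : IsCreationCAR c cd) (p : S) (q : F) (f : S → ℂ) (m n : F) :
    Commute (cd p q) (etaPair cd f m n) :=
  Commute.sum_right _ _ _ fun l _ => (h.commute_cd_pair p l q m n).smul_right _

theorem commute_pair_etaPair (h : IsCreationCAR c cd) (j : S) (m n : F) (f : S → ℂ) (m' n' : F) :
    Commute (cd j m * cd j n) (etaPair cd f m' n') :=
  (h.commute_cd_etaPair j m f m' n').mul_left (h.commute_cd_etaPair j n f m' n')

theorem lie_c_etaPair (h : IsCreationCAR c cd) (q : S) (a : F) (f : S → ℂ) (m n : F) :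
    ⁅c q a, etaPair cd f m n⁆ =
      f q • ((if a = m then cd q n else 0) - (if a = n then cd q m else 0)) := by
  simp only [etaPair, lie_sum, lie_smul, h.lie_c_pair, smul_ite, smul_zero, sum_ite_eq, mem_univ,
    if_true]

theorem lie_cd_mul_c_etaPair (h : IsCreationCAR c cd) (p q : S) (a : F) (f : S → ℂ) (m n : F) :
    ⁅cd p a * c q a, etaPair cd f m n⁆ =
      f q • ((if a = m then cd p m * cd q n else 0) - (if a = n then cd p n * cd q m else 0)) := by
  rw [mul_lie, h.lie_c_etaPair, commute_iff_lie_eq.mp (h.commute_cd_etaPair p a f m n), zero_mul,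
    add_zero, mul_smul_comm]
  split_ifs <;> simp_all

theorem lie_hopping_etaPair [Fintype F] (h : IsCreationCAR c cd) (p q : S) (f : S → ℂ) (m n : F) :
    ⁅hopping c cd p q, etaPair cd f m n⁆ =
      (f p + f q) • (cd p m * cd q n - cd p n * cd q m) := by
  simp only [hopping, sum_lie, add_lie, sum_add_distrib, h.lie_cd_mul_c_etaPair, ← smul_sum,
    sum_sub_distrib, sum_ite_eq', mem_univ, if_true, h.cd_mul_cd q p]
  module

theorem lie_number_etaPair (h : IsCreationCAR c cd) (j : S) (a : F) (f : S → ℂ) (m n : F) :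
    ⁅cd j a * c j a, etaPair cd f m n⁆ = (f j * pairCount m n a) • (cd j m * cd j n) := by
  rw [h.lie_cd_mul_c_etaPair, mul_smul]
  congr 1
  by_cases ham : a = m <;> by_cases han : a = n
  · subst ham han; simp [pairCount, h.cd_mul_self]
  · subst ham; simp [pairCount, han]
  · subst han; simp [pairCount, ham, h.cd_mul_cd j j a m]
  · simp [pairCount, ham, han]

theorem lie_number_mul_number_etaPair (h : IsCreationCAR c cd) (j : S) (a b : F) (f : S → ℂ)
    (m n : F) :
    ⁅(cd j a * c j a) * (cd j b * c j b), etaPair cd f m n⁆ =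
      (f j * (pairCount m n a * pairCount m n b)) • (cd j m * cd j n)
        + (f j * pairCount m n b) • (cd j m * cd j n * (cd j a * c j a))
        + (f j * pairCount m n a) • (cd j m * cd j n * (cd j b * c j b)) := by
  have reorder : (cd j a * c j a) * (cd j m * cd j n) =
      (cd j m * cd j n) * (cd j a * c j a) + pairCount m n a • (cd j m * cd j n) := by
    have := h.lie_number_etaPair j a (Pi.single j 1) m n
    rw [etaPair_single, Pi.single_eq_same, one_mul, Ring.lie_def] at this
    rw [← this, add_sub_cancel]
  rw [mul_lie, h.lie_number_etaPair, h.lie_number_etaPair, mul_smul_comm, reorder, smul_mul_assoc]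
  module

theorem lie_interaction_etaPair_sub_mem_span [Fintype F] (h : IsCreationCAR c cd) (f : S → ℂ)
    {m n : F} (hmn : m ≠ n) :
    ⁅interaction c cd, etaPair cd f m n⁆ - (2 : ℂ) • etaPair cd f m n ∈
      Submodule.span ℂ
        (Set.range fun p : S × F => cd p.1 m * cd p.1 n * (cd p.1 p.2 * c p.1 p.2)) := by
  set K :=
    Submodule.span ℂ (Set.range fun p : S × F => cd p.1 m * cd p.1 n * (cd p.1 p.2 * c p.1 p.2))
  have pairing : ∀ j, ∑ b, ∑ a,
      (if b ≠ a then (f j * (pairCount m n a * pairCount m n b)) • (cd j m * cd j n) else 0) =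
        (2 : ℂ) • f j • (cd j m * cd j n) := by
    intro j
    rw [smul_smul, ← sum_sum_ite_ne_pairCount_mul hmn, mul_comm]
    simp only [mul_sum, sum_smul, mul_ite, mul_zero, ite_smul, zero_smul]
  have expand : ⁅interaction c cd, etaPair cd f m n⁆ = (2 : ℂ) • etaPair cd f m n +
      ((∑ j, ∑ b, ∑ a, if b ≠ a then
          (f j * pairCount m n b) • (cd j m * cd j n * (cd j a * c j a)) else 0) +
        ∑ j, ∑ b, ∑ a, if b ≠ a then
          (f j * pairCount m n a) • (cd j m * cd j n * (cd j b * c j b)) else 0) := by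
    rw [interaction, sum_lie]
    simp only [sum_lie, apply_ite (fun x => ⁅x, etaPair cd f m n⁆), zero_lie,
      h.lie_number_mul_number_etaPair, ite_add_zero, sum_add_distrib, pairing]
    rw [etaPair, smul_sum, add_assoc]
  have mem : ∀ (P : Prop) [Decidable P] (z : ℂ) (j : S) (a : F),
      (if P then z • (cd j m * cd j n * (cd j a * c j a)) else 0) ∈ K := by
    intro P _ z j a
    split_ifs
    · exact Submodule.smul_mem _ _ (Submodule.subset_span ⟨(j, a), rfl⟩)
    · exact zero_mem _
  rw [expand, add_sub_cancel_left]
  exact add_mem (sum_mem fun j _ => sum_mem fun b _ => sum_mem fun a _ => mem _ _ j a)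
    (sum_mem fun j _ => sum_mem fun b _ => sum_mem fun a _ => mem _ _ j b)

theorem commute_pair_mul_number_etaPair (h : IsCreationCAR c cd) (j : S) (m n a : F) (f : S → ℂ)
    (n' : F) : Commute (cd j m * cd j n * (cd j a * c j a)) (etaPair cd f m n') := by
  have pair_mul_pair : cd j m * cd j n * (cd j m * cd j n') = 0 := by
    rw [mul_assoc, (h.commute_cd_pair j j n m n').eq, ← mul_assoc, ← mul_assoc, h.cd_mul_self,
      zero_mul, zero_mul]
  rw [commute_iff_lie_eq, mul_lie, h.lie_number_etaPair, mul_smul_comm, pair_mul_pair, smul_zero,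
    commute_iff_lie_eq.mp (h.commute_pair_etaPair j m n f m n'), zero_mul, add_zero]

end IsCreationCAR

theorem IsCreationCAR.lie_sum_hopping_etaPair_neg_one_pow [Algebra ℂ A] [Fintype F] {L : ℕ}
    [NeZero L] (hL : Even L) {c cd : Fin L → F → A} (h : IsCreationCAR c cd) (m n : F) :
    ⁅∑ j, hopping c cd j (j + 1), etaPair cd (fun j => (-1 : ℂ) ^ (j : ℕ)) m n⁆ = 0 := by
  simp only [sum_lie, h.lie_hopping_etaPair, neg_one_pow_val_add_one hL, add_neg_cancel, zero_smul,
    sum_const_zero]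

end

theorem eta_pairing_commutators_general {V : Type*} [AddCommGroup V] [Module ℂ V]
    (L N : ℕ) [NeZero L] [NeZero N] (hL : Even L)
    (c cd : Fin L → Fin N → Module.End ℂ V)
    (car_dd : ∀ j k a b, cd j a * cd k b + cd k b * cd j a = 0)
    (car_cd : ∀ j k a b,
      c j a * cd k b + cd k b * c j a = if j = k ∧ a = b then 1 else 0)
    (vac : V) (hvac : ∀ j a, (c j a) vac = 0)
    (J U : ℝ)
    (η : Fin N → Fin N → Module.End ℂ V)
    (hη : ∀ m n, η m n = ∑ j : Fin L, ((-1 : ℂ) ^ (j : ℕ)) • (cd j m * cd j n))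
    (Hhop Hint : Module.End ℂ V)
    (hHhop : Hhop =
      (-(J : ℂ)) • ∑ j : Fin L, ∑ n : Fin N,
        (cd j n * c (j + 1) n + cd (j + 1) n * c j n))
    (hHint : Hint =
      ((U : ℂ) / 2) • ∑ j : Fin L, ∑ n : Fin N, ∑ m : Fin N,
        if n ≠ m then (cd j m * c j m) * (cd j n * c j n) else 0) :
    (∀ m n : Fin N, m ≠ n → ⁅Hhop, η m n⁆ = 0) ∧
    (∀ m n : Fin N, m ≠ n → ∃ R : Module.End ℂ V,
      ⁅Hint, η m n⁆ = (U : ℂ) • η m n + R ∧ R vac = 0) ∧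
    (∀ n : Fin N, n ≠ 0 → ∀ mvec : Fin N → ℕ, mvec 0 = 0 →
      ⁅Hhop + Hint, η 0 n⁆
          ((List.ofFn fun n' => η 0 n' ^ mvec n').prod vac) =
        (U : ℂ) •
          (η 0 n) ((List.ofFn fun n' => η 0 n' ^ mvec n').prod vac)) := by
  let _ : LieRing (Module.End ℂ V) := LieRing.ofAssociativeRing
  have hcar : IsCreationCAR c cd := ⟨car_dd, car_cd⟩
  set f : Fin L → ℂ := fun j => (-1) ^ (j : ℕ)
  obtain rfl : η = etaPair cd f := funext fun m => funext fun n => hη m n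
  have lie_hop : ∀ m n, ⁅Hhop, etaPair cd f m n⁆ = 0 := fun m n => by
    rw [show Hhop = (-(J : ℂ)) • ∑ j, hopping c cd j (j + 1) from hHhop, smul_lie,
      hcar.lie_sum_hopping_etaPair_neg_one_pow hL, smul_zero]
  have residual_mem : ∀ m n, m ≠ n →
      ⁅Hint, etaPair cd f m n⁆ - (U : ℂ) • etaPair cd f m n ∈ Submodule.span ℂ
        (Set.range fun p : Fin L × Fin N => cd p.1 m * cd p.1 n * (cd p.1 p.2 * c p.1 p.2)) := by
    intro m n hmn
    have := Submodule.smul_mem _ ((U : ℂ) / 2) (hcar.lie_interaction_etaPair_sub_mem_span f hmn)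
    rwa [smul_sub, smul_smul, div_mul_cancel₀ _ two_ne_zero, ← smul_lie,
      show ((U : ℂ) / 2) • interaction c cd = Hint from hHint.symm] at this
  refine ⟨fun m n _ => lie_hop m n, fun m n hmn => ⟨_, (add_sub_cancel _ _).symm,
    Module.End.apply_eq_zero_of_mem_span (residual_mem m n hmn) ?_⟩, ?_⟩
  · rintro _ ⟨⟨j, a⟩, rfl⟩
    simp [Module.End.mul_apply, hvac]
  intro n hn mvec _
  set P := (List.ofFn fun n' => etaPair cd f 0 n' ^ mvec n').prod
  rw [add_lie, lie_hop, zero_add, ← sub_eq_zero, ← LinearMap.smul_apply, ← LinearMap.sub_apply]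
  refine Module.End.apply_eq_zero_of_mem_span (residual_mem 0 n hn.symm) ?_
  rintro _ ⟨⟨j, a⟩, rfl⟩
  have hP : Commute (cd j 0 * cd j n * (cd j a * c j a)) P :=
    Commute.list_prod_right _ _ fun x hx => by
      obtain ⟨n', rfl⟩ := List.mem_ofFn.mp hx
      exact (hcar.commute_pair_mul_number_etaPair j 0 n a f n').pow_right _
  rw [← Module.End.mul_apply, hP.eq, Module.End.mul_apply]
  simp [Module.End.mul_apply, hvac]

/-- η-pairing algebra in the SU(N) Hubbard model.  Fermionic operators
`c`/`cd` satisfy the canonical anticommutation relations on `L` sites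
(periodic boundary conditions, `L` even) with `N ≥ 2` flavors; `vac` is the
Fock vacuum.  With `η†_{mn} = Σ_j (−1)^j c†_{j,m} c†_{j,n}`, the hopping term
commutes with every `η†_{mn}`, the interaction commutator equals
`U η†_{mn}` plus terms annihilating the vacuum, and consequently
`[H, η†_{1n}]` acting on any tower state `Π_{n'} (η†_{1n'})^{m_{n'}} |vac⟩`
equals `U η†_{1n}` applied to that state. -/
theorem eta_pairing_commutators {V : Type*} [AddCommGroup V] [Module ℂ V]
    (L N : ℕ) [NeZero L] [NeZero N] (hL : Even L) (hN : 2 ≤ N)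
    (c cd : Fin L → Fin N → Module.End ℂ V)
    (car_cc : ∀ j k a b, c j a * c k b + c k b * c j a = 0)
    (car_dd : ∀ j k a b, cd j a * cd k b + cd k b * cd j a = 0)
    (car_cd : ∀ j k a b,
      c j a * cd k b + cd k b * c j a = if j = k ∧ a = b then 1 else 0)
    (vac : V) (hvac : ∀ j a, (c j a) vac = 0)
    (J U : ℝ)
    (η : Fin N → Fin N → Module.End ℂ V)
    (hη : ∀ m n, η m n = ∑ j : Fin L, ((-1 : ℂ) ^ (j : ℕ)) • (cd j m * cd j n))
    (Hhop Hint : Module.End ℂ V)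
    (hHhop : Hhop =
      (-(J : ℂ)) • ∑ j : Fin L, ∑ n : Fin N,
        (cd j n * c (j + 1) n + cd (j + 1) n * c j n))
    (hHint : Hint =
      ((U : ℂ) / 2) • ∑ j : Fin L, ∑ n : Fin N, ∑ m : Fin N,
        if n ≠ m then (cd j m * c j m) * (cd j n * c j n) else 0) :
    (∀ m n : Fin N, m ≠ n → ⁅Hhop, η m n⁆ = 0) ∧
    (∀ m n : Fin N, m ≠ n → ∃ R : Module.End ℂ V,
      ⁅Hint, η m n⁆ = (U : ℂ) • η m n + R ∧ R vac = 0) ∧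
    (∀ n : Fin N, n ≠ 0 → ∀ mvec : Fin N → ℕ, mvec 0 = 0 →
      ⁅Hhop + Hint, η 0 n⁆
          ((List.ofFn fun n' => η 0 n' ^ mvec n').prod vac) =
        (U : ℂ) •
          (η 0 n) ((List.ofFn fun n' => η 0 n' ^ mvec n').prod vac)) :=
  eta_pairing_commutators_general L N hL c cd car_dd car_cd vac hvac J U η hη Hhop Hint hHhop hHint
end

section
/- With the setup of the SU(N) Hubbard model (N ≥ 2, L even, periodic boundary conditions), the states |S̃'_{m'}⟩ = Π_{n=2}^N (η†_{1n})^{m'_n} |vac⟩ with Σ_n m'_n ≤ L satisfy H |S̃'_{m'}⟩ = U (Σ_{n=2}^N m'_n) |S̃'_{m'}⟩. -/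
namespace EtaScarAux

variable {V : Type*} [AddCommGroup V] [Module ℂ V] {L N : ℕ}

theorem dd_anti (cd : Fin L → Fin N → Module.End ℂ V)
    (car_dd : ∀ j k a b, cd j a * cd k b + cd k b * cd j a = 0)
    (j k : Fin L) (a b : Fin N) : cd j a * cd k b = -(cd k b * cd j a) :=
  eq_neg_of_add_eq_zero_left (car_dd j k a b)

theorem dd_sq (cd : Fin L → Fin N → Module.End ℂ V)
    (car_dd : ∀ j k a b, cd j a * cd k b + cd k b * cd j a = 0)
    (j : Fin L) (a : Fin N) : cd j a * cd j a = 0 := by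
  have h2 : (2:ℂ) • (cd j a * cd j a) = 0 := by
    rw [two_smul]; exact car_dd j j a a
  rcases smul_eq_zero.mp h2 with h | h
  · norm_num at h
  · exact h

theorem cd_pair_comm (cd : Fin L → Fin N → Module.End ℂ V)
    (car_dd : ∀ j k a b, cd j a * cd k b + cd k b * cd j a = 0)
    (j k : Fin L) (a b c' : Fin N) :
    cd j a * (cd k b * cd k c') = (cd k b * cd k c') * cd j a := by
  rw [← mul_assoc, dd_anti cd car_dd j k a b, neg_mul, mul_assoc,
    dd_anti cd car_dd j k a c', mul_neg, neg_neg, ← mul_assoc]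

theorem pair_pair_comm (cd : Fin L → Fin N → Module.End ℂ V)
    (car_dd : ∀ j k a b, cd j a * cd k b + cd k b * cd j a = 0)
    (j k : Fin L) (x y u v : Fin N) :
    (cd j x * cd j y) * (cd k u * cd k v) = (cd k u * cd k v) * (cd j x * cd j y) := by
  rw [mul_assoc, cd_pair_comm cd car_dd j k y u v, ← mul_assoc,
    cd_pair_comm cd car_dd j k x u v, mul_assoc]

theorem PP_zero (cd : Fin L → Fin N → Module.End ℂ V)
    (car_dd : ∀ j k a b, cd j a * cd k b + cd k b * cd j a = 0)
    (j : Fin L) (x y z : Fin N) :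
    (cd j x * cd j y) * (cd j x * cd j z) = 0 := by
  rw [mul_assoc, cd_pair_comm cd car_dd j j y x z, ← mul_assoc, ← mul_assoc,
    dd_sq cd car_dd j x]
  simp

theorem workhorse (c cd : Fin L → Fin N → Module.End ℂ V)
    (car_dd : ∀ j k a b, cd j a * cd k b + cd k b * cd j a = 0)
    (car_cd : ∀ j k a b,
      c j a * cd k b + cd k b * c j a = if j = k ∧ a = b then 1 else 0)
    (q p k : Fin L) (a b b' : Fin N) :
    (cd q a * c p a) * (cd k b * cd k b')
      = (cd k b * cd k b') * (cd q a * c p a)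
        + (if p = k ∧ a = b then (1:Module.End ℂ V) else 0) * (cd q a * cd k b')
        - (if p = k ∧ a = b' then (1:Module.End ℂ V) else 0) * (cd q a * cd k b) := by
  have h1 : c p a * cd k b
      = (if p = k ∧ a = b then (1:Module.End ℂ V) else 0) - cd k b * c p a :=
    eq_sub_of_add_eq (car_cd p k a b)
  have h2 : c p a * cd k b'
      = (if p = k ∧ a = b' then (1:Module.End ℂ V) else 0) - cd k b' * c p a :=
    eq_sub_of_add_eq (car_cd p k a b')
  have hc1 : cd q a * (if p = k ∧ a = b then (1:Module.End ℂ V) else 0)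
      = (if p = k ∧ a = b then (1:Module.End ℂ V) else 0) * cd q a := by
    split_ifs <;> simp
  have hc2 : (cd q a * cd k b) * (if p = k ∧ a = b' then (1:Module.End ℂ V) else 0)
      = (if p = k ∧ a = b' then (1:Module.End ℂ V) else 0) * (cd q a * cd k b) := by
    split_ifs <;> simp
  calc (cd q a * c p a) * (cd k b * cd k b')
      = cd q a * ((c p a * cd k b) * cd k b') := by
        rw [mul_assoc, ← mul_assoc (c p a)]
    _ = cd q a * (((if p = k ∧ a = b then (1:Module.End ℂ V) else 0) - cd k b * c p a)
          * cd k b') := by rw [h1]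
    _ = (cd q a * (if p = k ∧ a = b then (1:Module.End ℂ V) else 0)) * cd k b'
          - (cd q a * cd k b) * (c p a * cd k b') := by noncomm_ring
    _ = (cd q a * (if p = k ∧ a = b then (1:Module.End ℂ V) else 0)) * cd k b'
          - (cd q a * cd k b) * ((if p = k ∧ a = b' then (1:Module.End ℂ V) else 0)
              - cd k b' * c p a) := by rw [h2]
    _ = ((if p = k ∧ a = b then (1:Module.End ℂ V) else 0) * cd q a) * cd k b'
          - ((if p = k ∧ a = b' then (1:Module.End ℂ V) else 0) * (cd q a * cd k b))
          + (cd q a * (cd k b * cd k b')) * c p a := by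
        rw [hc1, ← hc2]; noncomm_ring
    _ = (cd k b * cd k b') * (cd q a * c p a)
        + (if p = k ∧ a = b then (1:Module.End ℂ V) else 0) * (cd q a * cd k b')
        - (if p = k ∧ a = b' then (1:Module.End ℂ V) else 0) * (cd q a * cd k b) := by
        rw [cd_pair_comm cd car_dd q k a b b']; noncomm_ring

theorem collapse (s : Fin L → ℂ) (p : Fin L) (Q : Prop) [Decidable Q]
    (M : Fin L → Module.End ℂ V) :
    ∑ k : Fin L, s k • ((if p = k ∧ Q then (1:Module.End ℂ V) else 0) * M k)
      = (if Q then (1:ℂ) else 0) • (s p • M p) := by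
  by_cases hQ : Q
  · simp only [hQ, and_true, boole_mul, smul_ite, smul_zero, if_true, one_smul]
    rw [Finset.sum_ite_eq]
    simp
  · simp [hQ]

theorem sum_ind (a₀ : Fin N) (C : Module.End ℂ V) :
    ∑ a : Fin N, (if a = a₀ then (1:ℂ) else 0) • C = C := by
  simp only [ite_smul, one_smul, zero_smul]
  rw [Finset.sum_ite_eq']
  simp

theorem ite_pin {α : Type*} [DecidableEq α] (a a₀ : α) (Z : α → Module.End ℂ V) :
    (if a = a₀ then (1:ℂ) else 0) • Z a = (if a = a₀ then (1:ℂ) else 0) • Z a₀ := by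
  split_ifs with h
  · rw [h]
  · simp

theorem sgn_succ [NeZero L] (hL : Even L) (j : Fin L) :
    ((-1:ℂ)) ^ (((j + 1 : Fin L)) : ℕ) = -((-1:ℂ)) ^ (j : ℕ) := by
  have hL2 : 2 ≤ L := by
    rcases Nat.lt_or_ge L 2 with h | h
    · interval_cases L
      · exact absurd rfl (NeZero.ne 0)
      · simp at hL
    · exact h
  have hmod : ∀ n : ℕ, ((-1:ℂ)) ^ (n % L) = (-1:ℂ) ^ n := by
    intro n
    conv_rhs => rw [← Nat.mod_add_div n L]
    rw [pow_add, pow_mul, hL.neg_one_pow, one_pow, mul_one]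
  have hval : ((j + 1 : Fin L) : ℕ) = (j.val + 1) % L := by
    rw [Fin.add_def]
    simp [Fin.val_one', Nat.mod_eq_of_lt hL2]
  rw [hval, hmod, pow_succ, mul_neg_one]

theorem beta_sum [NeZero N] (b : Fin N) (hb : b ≠ 0) :
    ∑ n : Fin N, ∑ m : Fin N,
      (if n ≠ m then
        ((if n = 0 then (1:ℂ) else 0) + (if n = b then 1 else 0))
          * ((if m = 0 then (1:ℂ) else 0) + (if m = b then 1 else 0)) else 0) = 2 := by
  set β : Fin N → ℂ := fun x => (if x = 0 then (1:ℂ) else 0) + (if x = b then 1 else 0)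
    with hβ
  have h1 : ∑ n : Fin N, β n = 2 := by
    simp only [hβ, Finset.sum_add_distrib]
    rw [Finset.sum_ite_eq', Finset.sum_ite_eq']
    norm_num
  have hsq : ∀ n : Fin N, β n * β n = β n := by
    intro n
    simp only [hβ]
    split_ifs with h h' h' <;> simp_all
  have h2 : ∀ n m : Fin N, (if n ≠ m then β n * β m else 0)
      = β n * β m - (if n = m then β n * β m else 0) := by
    intro n m; split_ifs with h h' <;> simp_all
  calc ∑ n : Fin N, ∑ m : Fin N, (if n ≠ m then β n * β m else 0)
      = ∑ n : Fin N, ∑ m : Fin N, (β n * β m - (if n = m then β n * β m else 0)) := by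
        refine Finset.sum_congr rfl fun n _ => Finset.sum_congr rfl fun m _ => h2 n m
    _ = (∑ n : Fin N, ∑ m : Fin N, β n * β m) - ∑ n : Fin N, β n * β n := by
        rw [← Finset.sum_sub_distrib]
        refine Finset.sum_congr rfl fun n _ => ?_
        rw [Finset.sum_sub_distrib]
        congr 1
        rw [Finset.sum_ite_eq]
        simp
    _ = (∑ n : Fin N, β n) * (∑ n : Fin N, β n) - ∑ n : Fin N, β n * β n := by
        rw [Finset.sum_mul_sum]
    _ = 2 := by
        rw [h1]
        have h3 : ∑ n : Fin N, β n * β n = ∑ n : Fin N, β n :=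
          Finset.sum_congr rfl fun n _ => hsq n
        rw [h3, h1]
        norm_num

theorem hop_comm_j [NeZero L] [NeZero N]
    (c cd : Fin L → Fin N → Module.End ℂ V)
    (car_dd : ∀ j k a b, cd j a * cd k b + cd k b * cd j a = 0)
    (car_cd : ∀ j k a b,
      c j a * cd k b + cd k b * c j a = if j = k ∧ a = b then 1 else 0)
    (hL : Even L) (j : Fin L) (b : Fin N) :
    ∑ a : Fin N, ((cd j a * c (j + 1) a + cd (j + 1) a * c j a)
        * (∑ k : Fin L, ((-1:ℂ) ^ (k : ℕ)) • (cd k 0 * cd k b)))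
    = ∑ a : Fin N, ((∑ k : Fin L, ((-1:ℂ) ^ (k : ℕ)) • (cd k 0 * cd k b))
        * (cd j a * c (j + 1) a + cd (j + 1) a * c j a)) := by
  set s : Fin L → ℂ := fun k => (-1:ℂ) ^ (k : ℕ) with hs_def
  set Eb : Module.End ℂ V := ∑ k : Fin L, s k • (cd k 0 * cd k b) with hEb
  rw [← sub_eq_zero, ← Finset.sum_sub_distrib]
  have hs1 : s (j + 1) = -(s j) := by
    simp only [hs_def]
    exact sgn_succ hL j
  have per_a : ∀ a : Fin N,
      (cd j a * c (j + 1) a + cd (j + 1) a * c j a) * Eb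
        - Eb * (cd j a * c (j + 1) a + cd (j + 1) a * c j a)
      = (if a = 0 then (1:ℂ) else 0) •
          (s (j + 1) • (cd j 0 * cd (j + 1) b) + s j • (cd (j + 1) 0 * cd j b))
        - (if a = b then (1:ℂ) else 0) •
          (s (j + 1) • (cd j b * cd (j + 1) 0) + s j • (cd (j + 1) b * cd j 0)) := by
    intro a
    have expand : (cd j a * c (j + 1) a + cd (j + 1) a * c j a) * Eb
        - Eb * (cd j a * c (j + 1) a + cd (j + 1) a * c j a)
        = ∑ k : Fin L, s k •
            (((cd j a * c (j + 1) a) * (cd k 0 * cd k b)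
                - (cd k 0 * cd k b) * (cd j a * c (j + 1) a))
             + ((cd (j + 1) a * c j a) * (cd k 0 * cd k b)
                - (cd k 0 * cd k b) * (cd (j + 1) a * c j a))) := by
      rw [hEb, Finset.mul_sum, Finset.sum_mul, ← Finset.sum_sub_distrib]
      refine Finset.sum_congr rfl fun k _ => ?_
      simp only [smul_sub, smul_add, mul_smul_comm, smul_mul_assoc, add_mul, mul_add]
      abel
    rw [expand]
    have comm_k : ∀ k : Fin L,
        ((cd j a * c (j + 1) a) * (cd k 0 * cd k b)
            - (cd k 0 * cd k b) * (cd j a * c (j + 1) a))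
          + ((cd (j + 1) a * c j a) * (cd k 0 * cd k b)
            - (cd k 0 * cd k b) * (cd (j + 1) a * c j a))
        = ((if (j + 1 : Fin L) = k ∧ a = 0 then (1:Module.End ℂ V) else 0)
              * (cd j a * cd k b)
            - (if (j + 1 : Fin L) = k ∧ a = b then (1:Module.End ℂ V) else 0)
              * (cd j a * cd k 0))
          + ((if j = k ∧ a = 0 then (1:Module.End ℂ V) else 0)
              * (cd (j + 1) a * cd k b)
            - (if j = k ∧ a = b then (1:Module.End ℂ V) else 0)
              * (cd (j + 1) a * cd k 0)) := by
      intro k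
      rw [workhorse c cd car_dd car_cd j (j + 1) k a 0 b,
        workhorse c cd car_dd car_cd (j + 1) j k a 0 b]
      abel
    calc ∑ k : Fin L, s k •
            (((cd j a * c (j + 1) a) * (cd k 0 * cd k b)
                - (cd k 0 * cd k b) * (cd j a * c (j + 1) a))
             + ((cd (j + 1) a * c j a) * (cd k 0 * cd k b)
                - (cd k 0 * cd k b) * (cd (j + 1) a * c j a)))
        = ∑ k : Fin L,
            (s k • ((if (j + 1 : Fin L) = k ∧ a = 0 then (1:Module.End ℂ V) else 0)
                * (cd j a * cd k b))
             - s k • ((if (j + 1 : Fin L) = k ∧ a = b then (1:Module.End ℂ V) else 0)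
                * (cd j a * cd k 0))
             + (s k • ((if j = k ∧ a = 0 then (1:Module.End ℂ V) else 0)
                * (cd (j + 1) a * cd k b))
             - s k • ((if j = k ∧ a = b then (1:Module.End ℂ V) else 0)
                * (cd (j + 1) a * cd k 0)))) := by
          refine Finset.sum_congr rfl fun k _ => ?_
          rw [comm_k k]
          simp only [smul_sub, smul_add]
      _ = (if a = 0 then (1:ℂ) else 0) • (s (j + 1) • (cd j a * cd (j + 1) b))
          - (if a = b then (1:ℂ) else 0) • (s (j + 1) • (cd j a * cd (j + 1) 0))
          + ((if a = 0 then (1:ℂ) else 0) • (s j • (cd (j + 1) a * cd j b))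
          - (if a = b then (1:ℂ) else 0) • (s j • (cd (j + 1) a * cd j 0))) := by
          rw [Finset.sum_add_distrib, Finset.sum_sub_distrib, Finset.sum_sub_distrib,
            collapse s (j + 1) (a = 0), collapse s (j + 1) (a = b),
            collapse s j (a = 0), collapse s j (a = b)]
      _ = (if a = 0 then (1:ℂ) else 0) •
            (s (j + 1) • (cd j 0 * cd (j + 1) b) + s j • (cd (j + 1) 0 * cd j b))
          - (if a = b then (1:ℂ) else 0) •
            (s (j + 1) • (cd j b * cd (j + 1) 0) + s j • (cd (j + 1) b * cd j 0)) := by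
          rw [ite_pin a 0 (fun x => s (j + 1) • (cd j x * cd (j + 1) b)),
            ite_pin a b (fun x => s (j + 1) • (cd j x * cd (j + 1) 0)),
            ite_pin a 0 (fun x => s j • (cd (j + 1) x * cd j b)),
            ite_pin a b (fun x => s j • (cd (j + 1) x * cd j 0))]
          simp only [smul_add]
          abel
  calc ∑ a : Fin N,
        ((cd j a * c (j + 1) a + cd (j + 1) a * c j a) * Eb
          - Eb * (cd j a * c (j + 1) a + cd (j + 1) a * c j a))
      = ∑ a : Fin N,
          ((if a = 0 then (1:ℂ) else 0) •
              (s (j + 1) • (cd j 0 * cd (j + 1) b) + s j • (cd (j + 1) 0 * cd j b))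
            - (if a = b then (1:ℂ) else 0) •
              (s (j + 1) • (cd j b * cd (j + 1) 0) + s j • (cd (j + 1) b * cd j 0))) := by
        exact Finset.sum_congr rfl fun a _ => per_a a
    _ = (s (j + 1) • (cd j 0 * cd (j + 1) b) + s j • (cd (j + 1) 0 * cd j b))
        - (s (j + 1) • (cd j b * cd (j + 1) 0) + s j • (cd (j + 1) b * cd j 0)) := by
        rw [Finset.sum_sub_distrib, sum_ind, sum_ind]
    _ = 0 := by
        rw [hs1, dd_anti cd car_dd (j + 1) j 0 b, dd_anti cd car_dd (j + 1) j b 0]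
        module

theorem pairE_comm (cd : Fin L → Fin N → Module.End ℂ V)
    (car_dd : ∀ j k a b, cd j a * cd k b + cd k b * cd j a = 0)
    [NeZero N] (j : Fin L) (x y b : Fin N) :
    (cd j x * cd j y) * (∑ k : Fin L, ((-1:ℂ) ^ (k : ℕ)) • (cd k 0 * cd k b))
      = (∑ k : Fin L, ((-1:ℂ) ^ (k : ℕ)) • (cd k 0 * cd k b)) * (cd j x * cd j y) := by
  rw [Finset.mul_sum, Finset.sum_mul]
  refine Finset.sum_congr rfl fun k _ => ?_
  rw [mul_smul_comm, smul_mul_assoc, pair_pair_comm cd car_dd j k x y 0 b]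

theorem nE_comm [NeZero N] (c cd : Fin L → Fin N → Module.End ℂ V)
    (car_dd : ∀ j k a b, cd j a * cd k b + cd k b * cd j a = 0)
    (car_cd : ∀ j k a b,
      c j a * cd k b + cd k b * c j a = if j = k ∧ a = b then 1 else 0)
    (j : Fin L) (aa b : Fin N) :
    (cd j aa * c j aa) * (∑ k : Fin L, ((-1:ℂ) ^ (k : ℕ)) • (cd k 0 * cd k b))
      = (∑ k : Fin L, ((-1:ℂ) ^ (k : ℕ)) • (cd k 0 * cd k b)) * (cd j aa * c j aa)
        + (if aa = 0 then (1:ℂ) else 0) • (((-1:ℂ) ^ (j : ℕ)) • (cd j 0 * cd j b))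
        - (if aa = b then (1:ℂ) else 0) • (((-1:ℂ) ^ (j : ℕ)) • (cd j b * cd j 0)) := by
  set s : Fin L → ℂ := fun k => (-1:ℂ) ^ (k : ℕ) with hs_def
  calc (cd j aa * c j aa) * (∑ k : Fin L, s k • (cd k 0 * cd k b))
      = ∑ k : Fin L, s k • ((cd j aa * c j aa) * (cd k 0 * cd k b)) := by
        rw [Finset.mul_sum]
        exact Finset.sum_congr rfl fun k _ => mul_smul_comm _ _ _
    _ = ∑ k : Fin L,
          (s k • ((cd k 0 * cd k b) * (cd j aa * c j aa))
            + s k • ((if j = k ∧ aa = 0 then (1:Module.End ℂ V) else 0)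
                * (cd j aa * cd k b))
            - s k • ((if j = k ∧ aa = b then (1:Module.End ℂ V) else 0)
                * (cd j aa * cd k 0))) := by
        refine Finset.sum_congr rfl fun k _ => ?_
        rw [workhorse c cd car_dd car_cd j j k aa 0 b]
        simp only [smul_add, smul_sub]
    _ = (∑ k : Fin L, s k • ((cd k 0 * cd k b) * (cd j aa * c j aa)))
          + (if aa = 0 then (1:ℂ) else 0) • (s j • (cd j aa * cd j b))
          - (if aa = b then (1:ℂ) else 0) • (s j • (cd j aa * cd j 0)) := by
        rw [Finset.sum_sub_distrib, Finset.sum_add_distrib,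
          collapse s j (aa = 0), collapse s j (aa = b)]
    _ = (∑ k : Fin L, s k • (cd k 0 * cd k b)) * (cd j aa * c j aa)
          + (if aa = 0 then (1:ℂ) else 0) • (s j • (cd j 0 * cd j b))
          - (if aa = b then (1:ℂ) else 0) • (s j • (cd j b * cd j 0)) := by
        have hsum : ∑ k : Fin L, s k • ((cd k 0 * cd k b) * (cd j aa * c j aa))
            = (∑ k : Fin L, s k • (cd k 0 * cd k b)) * (cd j aa * c j aa) := by
          rw [Finset.sum_mul]
          exact Finset.sum_congr rfl fun k _ => (smul_mul_assoc _ _ _).symm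
        rw [hsum, ite_pin aa 0 (fun x => s j • (cd j x * cd j b)),
          ite_pin aa b (fun x => s j • (cd j x * cd j 0))]

theorem Pn_E_comm [NeZero N] (c cd : Fin L → Fin N → Module.End ℂ V)
    (car_dd : ∀ j k a b, cd j a * cd k b + cd k b * cd j a = 0)
    (car_cd : ∀ j k a b,
      c j a * cd k b + cd k b * c j a = if j = k ∧ a = b then 1 else 0)
    (j : Fin L) (n' aa b : Fin N) :
    ((cd j 0 * cd j n') * (cd j aa * c j aa))
        * (∑ k : Fin L, ((-1:ℂ) ^ (k : ℕ)) • (cd k 0 * cd k b))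
      = (∑ k : Fin L, ((-1:ℂ) ^ (k : ℕ)) • (cd k 0 * cd k b))
        * ((cd j 0 * cd j n') * (cd j aa * c j aa)) := by
  have z1 : (cd j 0 * cd j n') * (cd j 0 * cd j b) = 0 := PP_zero cd car_dd j 0 n' b
  have z2 : (cd j 0 * cd j n') * (cd j b * cd j 0) = 0 := by
    rw [dd_anti cd car_dd j j b 0, mul_neg, z1, neg_zero]
  rw [mul_assoc, nE_comm c cd car_dd car_cd j aa b]
  rw [mul_sub, mul_add, mul_smul_comm, mul_smul_comm, mul_smul_comm, mul_smul_comm,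
    z1, z2]
  simp only [smul_zero, add_zero, sub_zero]
  rw [← mul_assoc, pairE_comm cd car_dd j 0 n' b, mul_assoc]

theorem nD_comm [NeZero N] (c cd : Fin L → Fin N → Module.End ℂ V)
    (car_dd : ∀ j k a b, cd j a * cd k b + cd k b * cd j a = 0)
    (car_cd : ∀ j k a b,
      c j a * cd k b + cd k b * c j a = if j = k ∧ a = b then 1 else 0)
    (k : Fin L) (aa b : Fin N) :
    (cd k aa * c k aa) * (cd k 0 * cd k b)
      = (cd k 0 * cd k b) * (cd k aa * c k aa)
        + ((if aa = 0 then (1:ℂ) else 0) + (if aa = b then (1:ℂ) else 0))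
            • (cd k 0 * cd k b) := by
  have h := workhorse c cd car_dd car_cd k k k aa 0 b
  simp only [eq_self_iff_true, true_and] at h
  have e1 : (if aa = 0 then (1:Module.End ℂ V) else 0) * (cd k aa * cd k b)
      = (if aa = 0 then (1:ℂ) else 0) • (cd k 0 * cd k b) := by
    split_ifs with h0
    · subst h0; simp
    · simp
  have e2 : (if aa = b then (1:Module.End ℂ V) else 0) * (cd k aa * cd k 0)
      = -((if aa = b then (1:ℂ) else 0) • (cd k 0 * cd k b)) := by
    split_ifs with hb0
    · subst hb0; rw [dd_anti cd car_dd k k aa 0]; simp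
    · simp
  rw [h, e1, e2]
  module

theorem nD_ne (c cd : Fin L → Fin N → Module.End ℂ V)
    (car_dd : ∀ j k a b, cd j a * cd k b + cd k b * cd j a = 0)
    (car_cd : ∀ j k a b,
      c j a * cd k b + cd k b * c j a = if j = k ∧ a = b then 1 else 0)
    {j k : Fin L} (hjk : j ≠ k) (aa b b' : Fin N) :
    (cd j aa * c j aa) * (cd k b * cd k b')
      = (cd k b * cd k b') * (cd j aa * c j aa) := by
  have h := workhorse c cd car_dd car_cd j j k aa b b'
  simp only [hjk, false_and, if_false, zero_mul, add_zero, sub_zero] at h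
  exact h

theorem WD_ne [NeZero N] (c cd : Fin L → Fin N → Module.End ℂ V)
    (car_dd : ∀ j k a b, cd j a * cd k b + cd k b * cd j a = 0)
    (car_cd : ∀ j k a b,
      c j a * cd k b + cd k b * c j a = if j = k ∧ a = b then 1 else 0)
    {j k : Fin L} (hjk : j ≠ k) (n m b : Fin N) :
    ((cd j m * c j m) * (cd j n * c j n)) * (cd k 0 * cd k b)
      = (cd k 0 * cd k b) * ((cd j m * c j m) * (cd j n * c j n)) := by
  rw [mul_assoc, nD_ne c cd car_dd car_cd hjk n 0 b, ← mul_assoc,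
    nD_ne c cd car_dd car_cd hjk m 0 b, mul_assoc]

theorem WD [NeZero N] (c cd : Fin L → Fin N → Module.End ℂ V)
    (car_dd : ∀ j k a b, cd j a * cd k b + cd k b * cd j a = 0)
    (car_cd : ∀ j k a b,
      c j a * cd k b + cd k b * c j a = if j = k ∧ a = b then 1 else 0)
    (k : Fin L) (b n m : Fin N) :
    ((cd k m * c k m) * (cd k n * c k n)) * (cd k 0 * cd k b)
      = (cd k 0 * cd k b) * ((cd k m * c k m) * (cd k n * c k n))
        + ((if m = 0 then (1:ℂ) else 0) + (if m = b then (1:ℂ) else 0))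
            • ((cd k 0 * cd k b) * (cd k n * c k n))
        + ((if n = 0 then (1:ℂ) else 0) + (if n = b then (1:ℂ) else 0))
            • ((cd k 0 * cd k b) * (cd k m * c k m))
        + (((if n = 0 then (1:ℂ) else 0) + (if n = b then (1:ℂ) else 0))
            * ((if m = 0 then (1:ℂ) else 0) + (if m = b then (1:ℂ) else 0)))
            • (cd k 0 * cd k b) := by
  rw [mul_assoc, nD_comm c cd car_dd car_cd k n b, mul_add, mul_smul_comm,
    ← mul_assoc, nD_comm c cd car_dd car_cd k m b]
  simp only [add_mul, smul_mul_assoc, smul_add, smul_smul, mul_assoc]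
  abel

theorem hopE [NeZero L] [NeZero N] (c cd : Fin L → Fin N → Module.End ℂ V)
    (car_dd : ∀ j k a b, cd j a * cd k b + cd k b * cd j a = 0)
    (car_cd : ∀ j k a b,
      c j a * cd k b + cd k b * c j a = if j = k ∧ a = b then 1 else 0)
    (hL : Even L) (J : ℝ) (Hhop : Module.End ℂ V)
    (hHhop : Hhop = (-(J : ℂ)) • ∑ j : Fin L, ∑ n : Fin N,
      (cd j n * c (j + 1) n + cd (j + 1) n * c j n)) (b : Fin N) :
    Hhop * (∑ k : Fin L, ((-1:ℂ) ^ (k : ℕ)) • (cd k 0 * cd k b))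
      = (∑ k : Fin L, ((-1:ℂ) ^ (k : ℕ)) • (cd k 0 * cd k b)) * Hhop := by
  rw [hHhop, smul_mul_assoc, mul_smul_comm]
  congr 1
  rw [Finset.sum_mul, Finset.mul_sum]
  refine Finset.sum_congr rfl fun j _ => ?_
  rw [Finset.sum_mul, Finset.mul_sum]
  exact hop_comm_j c cd car_dd car_cd hL j b

theorem hop_vac [NeZero L] [NeZero N] (c cd : Fin L → Fin N → Module.End ℂ V)
    (vac : V) (hvac : ∀ j a, (c j a) vac = 0) (J : ℝ) (Hhop : Module.End ℂ V)
    (hHhop : Hhop = (-(J : ℂ)) • ∑ j : Fin L, ∑ n : Fin N,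
      (cd j n * c (j + 1) n + cd (j + 1) n * c j n)) :
    Hhop vac = 0 := by
  rw [hHhop]
  simp [LinearMap.smul_apply, LinearMap.sum_apply, LinearMap.add_apply,
    Module.End.mul_apply, hvac]

theorem hint_vac [NeZero L] [NeZero N] (c cd : Fin L → Fin N → Module.End ℂ V)
    (vac : V) (hvac : ∀ j a, (c j a) vac = 0) (U : ℝ) (Hint : Module.End ℂ V)
    (hHint : Hint = ((U : ℂ) / 2) • ∑ j : Fin L, ∑ n : Fin N, ∑ m : Fin N,
      if n ≠ m then (cd j m * c j m) * (cd j n * c j n) else 0) :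
    Hint vac = 0 := by
  have iteap : ∀ (P : Prop) [Decidable P] (f : Module.End ℂ V) (v : V),
      (if P then f else (0:Module.End ℂ V)) v = if P then f v else 0 := by
    intro P _ f v; split_ifs <;> simp
  rw [hHint, LinearMap.smul_apply]
  have h0 : (∑ j : Fin L, ∑ n : Fin N, ∑ m : Fin N,
      if n ≠ m then (cd j m * c j m) * (cd j n * c j n) else (0:Module.End ℂ V)) vac
      = 0 := by
    rw [LinearMap.sum_apply]
    refine Finset.sum_eq_zero fun j _ => ?_
    rw [LinearMap.sum_apply]
    refine Finset.sum_eq_zero fun n _ => ?_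
    rw [LinearMap.sum_apply]
    refine Finset.sum_eq_zero fun m _ => ?_
    rw [iteap]
    split_ifs
    · simp [Module.End.mul_apply, hvac]
    · rfl
  rw [h0, smul_zero]

theorem van_scar [NeZero L] [NeZero N] (c cd : Fin L → Fin N → Module.End ℂ V)
    (car_dd : ∀ j k a b, cd j a * cd k b + cd k b * cd j a = 0)
    (car_cd : ∀ j k a b,
      c j a * cd k b + cd k b * c j a = if j = k ∧ a = b then 1 else 0)
    (vac : V) (hvac : ∀ j a, (c j a) vac = 0)
    (E : Fin N → Module.End ℂ V)
    (hE : ∀ b, E b = ∑ k : Fin L, ((-1:ℂ) ^ (k : ℕ)) • (cd k 0 * cd k b)) :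
    ∀ ms : List (Fin N), ∀ (j : Fin L) (n' aa : Fin N),
      ((cd j 0 * cd j n') * (cd j aa * c j aa)) (((ms.map E).prod) vac) = 0 := by
  intro ms
  induction ms with
  | nil =>
    intro j n' aa
    simp [Module.End.mul_apply, hvac]
  | cons b t ih =>
    intro j n' aa
    rw [List.map_cons, List.prod_cons,
      Module.End.mul_apply (E b) ((t.map E).prod),
      ← Module.End.mul_apply ((cd j 0 * cd j n') * (cd j aa * c j aa)) (E b),
      hE b, Pn_E_comm c cd car_dd car_cd j n' aa b,
      Module.End.mul_apply, ih j n' aa, map_zero]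

theorem hint_D [NeZero L] [NeZero N] (c cd : Fin L → Fin N → Module.End ℂ V)
    (car_dd : ∀ j k a b, cd j a * cd k b + cd k b * cd j a = 0)
    (car_cd : ∀ j k a b,
      c j a * cd k b + cd k b * c j a = if j = k ∧ a = b then 1 else 0)
    (U : ℝ) (Hint : Module.End ℂ V)
    (hHint : Hint = ((U : ℂ) / 2) • ∑ j : Fin L, ∑ n : Fin N, ∑ m : Fin N,
      if n ≠ m then (cd j m * c j m) * (cd j n * c j n) else 0)
    (k : Fin L) (b : Fin N) (hb : b ≠ 0) (w : V)
    (hw : ∀ n : Fin N, ((cd k 0 * cd k b) * (cd k n * c k n)) w = 0) :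
    Hint ((cd k 0 * cd k b) w)
      = (cd k 0 * cd k b) (Hint w) + (U : ℂ) • ((cd k 0 * cd k b) w) := by
  have iteap : ∀ (P : Prop) [Decidable P] (f : Module.End ℂ V) (v : V),
      (if P then f else (0:Module.End ℂ V)) v = if P then f v else 0 := by
    intro P _ f v; split_ifs <;> simp
  have key : ∀ (j : Fin L) (n m : Fin N),
      (((cd j m * c j m) * (cd j n * c j n)) * (cd k 0 * cd k b)) w
        = ((cd k 0 * cd k b) * ((cd j m * c j m) * (cd j n * c j n))) w
          + (if j = k then
              ((if n = 0 then (1:ℂ) else 0) + (if n = b then (1:ℂ) else 0))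
                * ((if m = 0 then (1:ℂ) else 0) + (if m = b then (1:ℂ) else 0))
             else 0) • ((cd k 0 * cd k b) w) := by
    intro j n m
    by_cases hj : j = k
    · subst hj
      rw [WD c cd car_dd car_cd j b n m]
      simp only [LinearMap.add_apply, LinearMap.smul_apply, hw n, hw m, smul_zero,
        add_zero]
      simp
    · rw [WD_ne c cd car_dd car_cd hj n m b]
      simp [hj]
  -- compute (S * D) w
  have happ : Hint ((cd k 0 * cd k b) w) = (Hint * (cd k 0 * cd k b)) w := rfl
  rw [happ, hHint, smul_mul_assoc, LinearMap.smul_apply]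
  have lhs1 : (((∑ j : Fin L, ∑ n : Fin N, ∑ m : Fin N,
        if n ≠ m then (cd j m * c j m) * (cd j n * c j n) else (0:Module.End ℂ V))
          * (cd k 0 * cd k b)) w)
      = ∑ j : Fin L, ∑ n : Fin N, ∑ m : Fin N,
          (if n ≠ m then
            ((((cd j m * c j m) * (cd j n * c j n)) * (cd k 0 * cd k b)) w) else 0) := by
    rw [Finset.sum_mul, LinearMap.sum_apply]
    refine Finset.sum_congr rfl fun j _ => ?_
    rw [Finset.sum_mul, LinearMap.sum_apply]
    refine Finset.sum_congr rfl fun n _ => ?_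
    rw [Finset.sum_mul, LinearMap.sum_apply]
    refine Finset.sum_congr rfl fun m _ => ?_
    rw [ite_mul, zero_mul, iteap]
  rw [lhs1]
  have lhs2 : ∀ (j : Fin L) (n m : Fin N),
      (if n ≠ m then
        ((((cd j m * c j m) * (cd j n * c j n)) * (cd k 0 * cd k b)) w) else 0)
      = (if n ≠ m then
          (((cd k 0 * cd k b) * ((cd j m * c j m) * (cd j n * c j n))) w) else 0)
        + (if n ≠ m then
            (if j = k then
              ((if n = 0 then (1:ℂ) else 0) + (if n = b then (1:ℂ) else 0))
                * ((if m = 0 then (1:ℂ) else 0) + (if m = b then (1:ℂ) else 0))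
             else 0) else 0) • ((cd k 0 * cd k b) w) := by
    intro j n m
    by_cases h : n ≠ m
    · simp only [if_pos h]
      exact key j n m
    · simp only [if_neg h]
      simp
  have step2 : ∑ j : Fin L, ∑ n : Fin N, ∑ m : Fin N,
        (if n ≠ m then
          ((((cd j m * c j m) * (cd j n * c j n)) * (cd k 0 * cd k b)) w) else 0)
      = (∑ j : Fin L, ∑ n : Fin N, ∑ m : Fin N,
          (if n ≠ m then
            (((cd k 0 * cd k b) * ((cd j m * c j m) * (cd j n * c j n))) w) else 0))
        + (∑ j : Fin L, ∑ n : Fin N, ∑ m : Fin N,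
            (if n ≠ m then
              (if j = k then
                ((if n = 0 then (1:ℂ) else 0) + (if n = b then (1:ℂ) else 0))
                  * ((if m = 0 then (1:ℂ) else 0) + (if m = b then (1:ℂ) else 0))
               else 0) else 0)) • ((cd k 0 * cd k b) w) := by
    calc ∑ j : Fin L, ∑ n : Fin N, ∑ m : Fin N,
        (if n ≠ m then
          ((((cd j m * c j m) * (cd j n * c j n)) * (cd k 0 * cd k b)) w) else 0)
        = ∑ j : Fin L, ∑ n : Fin N, ∑ m : Fin N,
            ((if n ≠ m then
              (((cd k 0 * cd k b) * ((cd j m * c j m) * (cd j n * c j n))) w) else 0)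
             + (if n ≠ m then
                (if j = k then
                  ((if n = 0 then (1:ℂ) else 0) + (if n = b then (1:ℂ) else 0))
                    * ((if m = 0 then (1:ℂ) else 0) + (if m = b then (1:ℂ) else 0))
                 else 0) else 0) • ((cd k 0 * cd k b) w)) := by
          exact Finset.sum_congr rfl fun j _ => Finset.sum_congr rfl fun n _ =>
            Finset.sum_congr rfl fun m _ => lhs2 j n m
      _ = _ := by
          simp only [Finset.sum_add_distrib, ← Finset.sum_smul]
  rw [step2]
  have swap_ite : ∀ (j : Fin L) (n m : Fin N),
      (if n ≠ m then
        (if j = k then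
          ((if n = 0 then (1:ℂ) else 0) + (if n = b then (1:ℂ) else 0))
            * ((if m = 0 then (1:ℂ) else 0) + (if m = b then (1:ℂ) else 0))
         else 0) else 0)
      = (if j = k then
          (if n ≠ m then
            ((if n = 0 then (1:ℂ) else 0) + (if n = b then (1:ℂ) else 0))
              * ((if m = 0 then (1:ℂ) else 0) + (if m = b then (1:ℂ) else 0))
           else 0) else 0) := by
    intro j n m; split_ifs <;> rfl
  have sc : (∑ j : Fin L, ∑ n : Fin N, ∑ m : Fin N,
      (if n ≠ m then
        (if j = k then
          ((if n = 0 then (1:ℂ) else 0) + (if n = b then (1:ℂ) else 0))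
            * ((if m = 0 then (1:ℂ) else 0) + (if m = b then (1:ℂ) else 0))
         else 0) else 0)) = 2 := by
    calc ∑ j : Fin L, ∑ n : Fin N, ∑ m : Fin N,
        (if n ≠ m then
          (if j = k then
            ((if n = 0 then (1:ℂ) else 0) + (if n = b then (1:ℂ) else 0))
              * ((if m = 0 then (1:ℂ) else 0) + (if m = b then (1:ℂ) else 0))
           else 0) else 0)
        = ∑ j : Fin L, (if j = k then
            (∑ n : Fin N, ∑ m : Fin N,
              (if n ≠ m then
                ((if n = 0 then (1:ℂ) else 0) + (if n = b then (1:ℂ) else 0))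
                  * ((if m = 0 then (1:ℂ) else 0) + (if m = b then (1:ℂ) else 0))
               else 0)) else 0) := by
          refine Finset.sum_congr rfl fun j _ => ?_
          rw [Finset.sum_congr rfl fun n (_ : n ∈ Finset.univ) =>
            Finset.sum_congr rfl fun m (_ : m ∈ Finset.univ) => swap_ite j n m]
          split_ifs with h
          · rfl
          · simp
      _ = 2 := by
          rw [Finset.sum_ite_eq']
          simp only [Finset.mem_univ, if_true]
          exact beta_sum b hb
  rw [sc]
  have part1 : (∑ j : Fin L, ∑ n : Fin N, ∑ m : Fin N,
      (if n ≠ m then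
        (((cd k 0 * cd k b) * ((cd j m * c j m) * (cd j n * c j n))) w) else 0))
      = (cd k 0 * cd k b) ((∑ j : Fin L, ∑ n : Fin N, ∑ m : Fin N,
          if n ≠ m then (cd j m * c j m) * (cd j n * c j n)
          else (0:Module.End ℂ V)) w) := by
    refine Eq.symm ?_
    rw [LinearMap.sum_apply, map_sum]
    refine Finset.sum_congr rfl fun j _ => ?_
    rw [LinearMap.sum_apply, map_sum]
    refine Finset.sum_congr rfl fun n _ => ?_
    rw [LinearMap.sum_apply, map_sum]
    refine Finset.sum_congr rfl fun m _ => ?_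
    rw [iteap]
    split_ifs
    · exact (Module.End.mul_apply _ _ _).symm
    · exact map_zero _
  rw [part1, LinearMap.smul_apply, map_smul, smul_add, smul_smul]
  have h22 : (U : ℂ) / 2 * 2 = (U : ℂ) := by ring
  rw [h22]

theorem hop_scar [NeZero L] [NeZero N] (c cd : Fin L → Fin N → Module.End ℂ V)
    (car_dd : ∀ j k a b, cd j a * cd k b + cd k b * cd j a = 0)
    (car_cd : ∀ j k a b,
      c j a * cd k b + cd k b * c j a = if j = k ∧ a = b then 1 else 0)
    (hL : Even L) (vac : V) (hvac : ∀ j a, (c j a) vac = 0)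
    (J : ℝ) (Hhop : Module.End ℂ V)
    (hHhop : Hhop = (-(J : ℂ)) • ∑ j : Fin L, ∑ n : Fin N,
      (cd j n * c (j + 1) n + cd (j + 1) n * c j n))
    (E : Fin N → Module.End ℂ V)
    (hE : ∀ b, E b = ∑ k : Fin L, ((-1:ℂ) ^ (k : ℕ)) • (cd k 0 * cd k b)) :
    ∀ ms : List (Fin N), Hhop (((ms.map E).prod) vac) = 0 := by
  intro ms
  induction ms with
  | nil =>
    simp only [List.map_nil, List.prod_nil, Module.End.one_apply]
    exact hop_vac c cd vac hvac J Hhop hHhop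
  | cons b t ih =>
    rw [List.map_cons, List.prod_cons, Module.End.mul_apply (E b) ((t.map E).prod),
      ← Module.End.mul_apply Hhop (E b), hE b,
      hopE c cd car_dd car_cd hL J Hhop hHhop b, Module.End.mul_apply, ih, map_zero]

theorem hint_scar [NeZero L] [NeZero N] (c cd : Fin L → Fin N → Module.End ℂ V)
    (car_dd : ∀ j k a b, cd j a * cd k b + cd k b * cd j a = 0)
    (car_cd : ∀ j k a b,
      c j a * cd k b + cd k b * c j a = if j = k ∧ a = b then 1 else 0)
    (vac : V) (hvac : ∀ j a, (c j a) vac = 0)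
    (U : ℝ) (Hint : Module.End ℂ V)
    (hHint : Hint = ((U : ℂ) / 2) • ∑ j : Fin L, ∑ n : Fin N, ∑ m : Fin N,
      if n ≠ m then (cd j m * c j m) * (cd j n * c j n) else 0)
    (E : Fin N → Module.End ℂ V)
    (hE : ∀ b, E b = ∑ k : Fin L, ((-1:ℂ) ^ (k : ℕ)) • (cd k 0 * cd k b)) :
    ∀ ms : List (Fin N),
      Hint (((ms.map E).prod) vac)
        = ((U : ℂ) * (ms.length : ℂ)) • (((ms.map E).prod) vac) := by
  intro ms
  induction ms with
  | nil =>
    simp only [List.map_nil, List.prod_nil, Module.End.one_apply, List.length_nil,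
      Nat.cast_zero, mul_zero, zero_smul]
    exact hint_vac c cd vac hvac U Hint hHint
  | cons b t ih =>
    by_cases hb : b = 0
    · subst hb
      have hE0 : E 0 = 0 := by
        rw [hE 0]
        refine Finset.sum_eq_zero fun k _ => ?_
        rw [dd_sq cd car_dd k 0, smul_zero]
      rw [List.map_cons, List.prod_cons, hE0, zero_mul]
      simp
    · rw [List.map_cons, List.prod_cons,
        Module.End.mul_apply (E b) ((t.map E).prod)]
      have hEw : ∀ v : V, (E b) v
          = ∑ k : Fin L, ((-1:ℂ) ^ (k : ℕ)) • ((cd k 0 * cd k b) v) := by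
        intro v
        rw [hE b, LinearMap.sum_apply]
        exact Finset.sum_congr rfl fun k _ => rfl
      rw [hEw]
      have hvan : ∀ (k : Fin L) (n : Fin N),
          ((cd k 0 * cd k b) * (cd k n * c k n)) (((t.map E).prod) vac) = 0 :=
        fun k n => van_scar c cd car_dd car_cd vac hvac E hE t k b n
      calc Hint (∑ k : Fin L, ((-1:ℂ) ^ (k : ℕ)) •
              ((cd k 0 * cd k b) (((t.map E).prod) vac)))
          = ∑ k : Fin L, ((-1:ℂ) ^ (k : ℕ)) •
              (Hint ((cd k 0 * cd k b) (((t.map E).prod) vac))) := by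
            rw [map_sum]
            exact Finset.sum_congr rfl fun k _ => map_smul Hint _ _
        _ = ∑ k : Fin L, ((-1:ℂ) ^ (k : ℕ)) •
              ((cd k 0 * cd k b) (Hint (((t.map E).prod) vac))
                + (U : ℂ) • ((cd k 0 * cd k b) (((t.map E).prod) vac))) := by
            refine Finset.sum_congr rfl fun k _ => ?_
            rw [hint_D c cd car_dd car_cd U Hint hHint k b hb
              (((t.map E).prod) vac) (hvan k)]
        _ = ∑ k : Fin L,
              (((U : ℂ) * (t.length : ℂ)) •
                  (((-1:ℂ) ^ (k : ℕ)) • ((cd k 0 * cd k b) (((t.map E).prod) vac)))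
                + (U : ℂ) •
                  (((-1:ℂ) ^ (k : ℕ)) • ((cd k 0 * cd k b) (((t.map E).prod) vac)))) := by
            refine Finset.sum_congr rfl fun k _ => ?_
            rw [ih, map_smul, smul_add, smul_comm ((-1:ℂ) ^ (k : ℕ)),
              smul_comm ((-1:ℂ) ^ (k : ℕ))]
        _ = ((U : ℂ) * (t.length : ℂ) + (U : ℂ)) •
              (∑ k : Fin L, ((-1:ℂ) ^ (k : ℕ)) •
                ((cd k 0 * cd k b) (((t.map E).prod) vac))) := by
            rw [Finset.sum_add_distrib, add_smul, ← Finset.smul_sum, ← Finset.smul_sum]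
        _ = ((U : ℂ) * (((b :: t).length : ℕ) : ℂ)) •
              (∑ k : Fin L, ((-1:ℂ) ^ (k : ℕ)) •
                ((cd k 0 * cd k b) (((t.map E).prod) vac))) := by
            congr 1
            simp only [List.length_cons]
            push_cast
            ring

end EtaScarAux

open EtaScarAux in
/-- Exact η-pairing scar tower of the SU(N) Hubbard model: the states
`|S̃'_{m'}⟩ = Π_{n'} (η†_{1n'})^{m'_{n'}} |vac⟩` with `Σ m'_{n'} ≤ L` satisfy
`H |S̃'_{m'}⟩ = U (Σ m'_{n'}) |S̃'_{m'}⟩`. -/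
theorem eta_pairing_scar_tower {V : Type*} [AddCommGroup V] [Module ℂ V]
    (L N : ℕ) [NeZero L] [NeZero N] (hL : Even L) (hN : 2 ≤ N)
    (c cd : Fin L → Fin N → Module.End ℂ V)
    (car_cc : ∀ j k a b, c j a * c k b + c k b * c j a = 0)
    (car_dd : ∀ j k a b, cd j a * cd k b + cd k b * cd j a = 0)
    (car_cd : ∀ j k a b,
      c j a * cd k b + cd k b * c j a = if j = k ∧ a = b then 1 else 0)
    (vac : V) (hvac : ∀ j a, (c j a) vac = 0)
    (J U : ℝ)
    (η : Fin N → Fin N → Module.End ℂ V)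
    (hη : ∀ m n, η m n = ∑ j : Fin L, ((-1 : ℂ) ^ (j : ℕ)) • (cd j m * cd j n))
    (Hhop Hint : Module.End ℂ V)
    (hHhop : Hhop =
      (-(J : ℂ)) • ∑ j : Fin L, ∑ n : Fin N,
        (cd j n * c (j + 1) n + cd (j + 1) n * c j n))
    (hHint : Hint =
      ((U : ℂ) / 2) • ∑ j : Fin L, ∑ n : Fin N, ∑ m : Fin N,
        if n ≠ m then (cd j m * c j m) * (cd j n * c j n) else 0) :
    ∀ mvec : Fin N → ℕ, mvec 0 = 0 → (∑ n, mvec n) ≤ L →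
      (Hhop + Hint) ((List.ofFn fun n' => η 0 n' ^ mvec n').prod vac) =
        ((U : ℂ) * (∑ n, (mvec n : ℂ))) •
          ((List.ofFn fun n' => η 0 n' ^ mvec n').prod vac) := by
  intro mvec _ _
  have hE : ∀ b, η 0 b = ∑ k : Fin L, ((-1:ℂ) ^ (k : ℕ)) • (cd k 0 * cd k b) :=
    fun b => hη 0 b
  set ms : List (Fin N) := (List.ofFn fun n' => List.replicate (mvec n') n').flatten
    with hms
  have hprod : ((ms.map (η 0)).prod) = (List.ofFn fun n' => η 0 n' ^ mvec n').prod := by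
    rw [hms, List.map_flatten, List.map_ofFn, List.prod_flatten, List.map_ofFn]
    apply congrArg List.prod
    apply congrArg List.ofFn
    funext n'
    simp [Function.comp, List.map_replicate, List.prod_replicate]
  have hlen : ((ms.length : ℕ) : ℂ) = ∑ n, (mvec n : ℂ) := by
    rw [hms, List.length_flatten, List.map_ofFn]
    have h1 : (List.ofFn (List.length ∘ fun n' : Fin N =>
        List.replicate (mvec n') n')).sum = ∑ n, mvec n := by
      simp [Function.comp, List.sum_ofFn]
    rw [h1]
    push_cast
    rfl
  rw [← hprod, LinearMap.add_apply,
    hop_scar c cd car_dd car_cd hL vac hvac J Hhop hHhop (η 0) hE ms,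
    hint_scar c cd car_dd car_cd vac hvac U Hint hHint (η 0) hE ms, zero_add, hlen]
end

section
/- Let H = H₀ + H' act on a Hilbert space, let P be an orthogonal projection, and let |φ⟩ be a unit vector. If P|φ⟩ = |φ⟩, PH₀P = 0, and [H', P] = 0, then the energy variance ΔE² := ⟨φ|H²|φ⟩ − ⟨φ|H|φ⟩² satisfies ΔE² = ⟨φ|H₀²|φ⟩ + Var_φ(H'), and if moreover |φ⟩ is an eigenvector of PH'P then ΔE² = ⟨φ|PH₀²P|φ⟩. -/
open scoped InnerProductSpace

/-- Energy-variance formula for asymptotic scars: if `P|φ⟩ = |φ⟩`,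
`P H₀ P = 0`, and `[H', P] = 0`, then the variance of `H = H₀ + H'` in `φ`
splits as `⟨φ|H₀²|φ⟩ + Var_φ(H')`; if moreover `φ` is an eigenvector of
`P H' P` then `ΔE² = ⟨φ|P H₀² P|φ⟩`. -/
theorem energy_variance_formula {E : Type*} [NormedAddCommGroup E]
    [InnerProductSpace ℂ E] [CompleteSpace E]
    (H₀ H' P : E →L[ℂ] E)
    (hH₀ : IsSelfAdjoint H₀) (hH' : IsSelfAdjoint H')
    (hPsa : IsSelfAdjoint P) (hPidem : P ∘L P = P)
    (hPH0P : P ∘L H₀ ∘L P = 0)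
    (hcomm : H' ∘L P = P ∘L H')
    (φ : E) (hφ : ‖φ‖ = 1) (hPφ : P φ = φ) :
    (⟪φ, ((H₀ + H') ∘L (H₀ + H')) φ⟫_ℂ - ⟪φ, (H₀ + H') φ⟫_ℂ ^ 2 =
        ⟪φ, (H₀ ∘L H₀) φ⟫_ℂ +
          (⟪φ, (H' ∘L H') φ⟫_ℂ - ⟪φ, H' φ⟫_ℂ ^ 2)) ∧
    ((∃ c : ℂ, (P ∘L H' ∘L P) φ = c • φ) →
      ⟪φ, ((H₀ + H') ∘L (H₀ + H')) φ⟫_ℂ - ⟪φ, (H₀ + H') φ⟫_ℂ ^ 2 =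
        ⟪φ, (P ∘L (H₀ ∘L H₀) ∘L P) φ⟫_ℂ) := by
  have hPsymm : ∀ x y : E, ⟪P x, y⟫_ℂ = ⟪x, P y⟫_ℂ :=
    (ContinuousLinearMap.isSelfAdjoint_iff_isSymmetric.mp hPsa)
  have hH'symm : ∀ x y : E, ⟪H' x, y⟫_ℂ = ⟪x, H' y⟫_ℂ :=
    (ContinuousLinearMap.isSelfAdjoint_iff_isSymmetric.mp hH')
  -- P (H₀ (P x)) = 0
  have hz : ∀ x : E, P (H₀ (P x)) = 0 := by
    intro x
    have := congrArg (fun (A : E →L[ℂ] E) => A x) hPH0P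
    simpa using this
  -- H' φ is in range of P
  have hH'range : P (H' φ) = H' φ := by
    have := congrArg (fun (A : E →L[ℂ] E) => A φ) hcomm
    simp only [ContinuousLinearMap.comp_apply] at this
    rw [hPφ] at this
    exact this.symm
  -- ⟪φ, H₀ y⟫ = 0 whenever P y = y
  have key : ∀ y : E, P y = y → ⟪φ, H₀ y⟫_ℂ = 0 := by
    intro y hy
    calc ⟪φ, H₀ y⟫_ℂ = ⟪P φ, H₀ (P y)⟫_ℂ := by rw [hPφ, hy]
      _ = ⟪φ, P (H₀ (P y))⟫_ℂ := hPsymm _ _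
      _ = 0 := by rw [hz]; simp
  have e1 : ⟪φ, H₀ φ⟫_ℂ = 0 := key φ hPφ
  have e2 : ⟪φ, H₀ (H' φ)⟫_ℂ = 0 := key _ hH'range
  have e3 : ⟪φ, H' (H₀ φ)⟫_ℂ = 0 := by
    rw [← hH'symm]
    calc ⟪H' φ, H₀ φ⟫_ℂ = ⟪P (H' φ), H₀ (P φ)⟫_ℂ := by rw [hPφ, hH'range]
      _ = ⟪H' φ, P (H₀ (P φ))⟫_ℂ := hPsymm _ _
      _ = 0 := by rw [hz]; simp
  have expand : ⟪φ, ((H₀ + H') ∘L (H₀ + H')) φ⟫_ℂ =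
      ⟪φ, H₀ (H₀ φ)⟫_ℂ + ⟪φ, H' (H' φ)⟫_ℂ := by
    simp only [ContinuousLinearMap.comp_apply, ContinuousLinearMap.add_apply,
      map_add, inner_add_right]
    rw [e2, e3]; ring
  have expand1 : ⟪φ, (H₀ + H') φ⟫_ℂ = ⟪φ, H' φ⟫_ℂ := by
    simp only [ContinuousLinearMap.add_apply, inner_add_right]
    rw [e1]; ring
  have part1 : ⟪φ, ((H₀ + H') ∘L (H₀ + H')) φ⟫_ℂ - ⟪φ, (H₀ + H') φ⟫_ℂ ^ 2 =
      ⟪φ, (H₀ ∘L H₀) φ⟫_ℂ + (⟪φ, (H' ∘L H') φ⟫_ℂ - ⟪φ, H' φ⟫_ℂ ^ 2) := by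
    rw [expand, expand1]
    simp only [ContinuousLinearMap.comp_apply]
    ring
  refine ⟨part1, ?_⟩
  rintro ⟨c, hc⟩
  have hnorm : ⟪φ, φ⟫_ℂ = 1 := by
    rw [inner_self_eq_norm_sq_to_K, hφ]; norm_num
  -- H' φ = c • φ
  have heig : H' φ = c • φ := by
    simp only [ContinuousLinearMap.comp_apply, hPφ] at hc
    rw [← hH'range, hc]
  have hv1 : ⟪φ, H' φ⟫_ℂ = c := by rw [heig, inner_smul_right, hnorm, mul_one]
  have hv2 : ⟪φ, H' (H' φ)⟫_ℂ = c ^ 2 := by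
    rw [heig, map_smul, heig, smul_smul, inner_smul_right, hnorm]; ring
  have hrhs : ⟪φ, (P ∘L (H₀ ∘L H₀) ∘L P) φ⟫_ℂ = ⟪φ, H₀ (H₀ φ)⟫_ℂ := by
    simp only [ContinuousLinearMap.comp_apply, hPφ]
    rw [← hPsymm, hPφ]
  rw [expand, expand1, hrhs, hv1]
  rw [hv2]; ring
end
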